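/- (Covering perturbation bound for squared TD errors with optimal-Q targets). Let H ≥ 1 and ρ ≥ 0. Let r and r̂ be reward functions with values in [0,1] satisfying max_{h ∈ {1,…,H}} max_{(s,a)} |r_h(s,a) − r̂_h(s,a)| ≤ ρ, and let Q_h, Q̂_h : S × A → [0, H] satisfy max_{(s,a)} |Q_h(s,a) − Q̂_h(s,a)| ≤ ρ for a fixed h ∈ {1,…,H}. For a function G : S×A → ℝ with values in [0,H] and reward component g_h, define Z(G, g)(s,a,s') := ( G(s,a) − g_h(s,a) − max_{a' ∈ A} Q^{*,g}_{h+1}(s',a') )² − ( Q^{*,g}_h(s,a) − g_h(s,a) − max_{a' ∈ A} Q^{*,g}_{h+1}(s',a') )². Then for all s, a, s': | Z(Q_h, r)(s,a,s') − Z(Q̂_h, r̂)(s,a,s') | ≤ 30 H² ρ. -/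

import Mathlib

open scoped BigOperators

/-- Expectation of a real-valued function under a probability mass function
on a finite type. -/
noncomputable def pExp {α : Type*} [Fintype α] (p : PMF α) (f : α → ℝ) : ℝ :=
  ∑ x, (p x).toReal * f x

/-- Optimal Q-value function by backward recursion on the number of remaining
steps: `Qaux P r H t s a` is `Q^{*,r}_{H+1-t}(s,a)`, i.e. the optimal Q-value
with `t` steps remaining (so `Qaux P r H 0 = Q^{*,r}_{H+1} ≡ 0`). -/
noncomputable def Qaux {S A : Type*} [Fintype S] [Fintype A]
    (P : ℕ → S → A → PMF S) (r : ℕ → S → A → ℝ) (H : ℕ) : ℕ → S → A → ℝ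
  | 0, _, _ => 0
  | (t + 1), s, a =>
      r (H - t) s a + pExp (P (H - t) s a) (fun s' => ⨆ a', Qaux P r H t s' a')

/-! Backward induction shows that `Q^{*,g}_{h'}` takes values in `[0, H + 1 - h']` and moves by
at most `(H + 1 - h') ρ` when the reward moves by `ρ`, since maxima and expectations are
1-Lipschitz in the sup norm. Both TD errors in `Z` then lie in `[-(H + 1), H + 1]` and move by at
most `(H + 2) ρ` and `(2H + 1) ρ`, so, `x ↦ x²` being `2(H + 1)`-Lipschitz there,
`|ΔZ| ≤ 6 (H + 1)² ρ ≤ 30 H² ρ`. -/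

open Set

section pExp

variable {α : Type*} [Fintype α] (p : PMF α)

lemma PMF.sum_toReal_eq_one : ∑ x, (p x).toReal = 1 := by
  rw [← ENNReal.toReal_sum fun x _ => p.apply_ne_top x, ← tsum_fintype (L := .unconditional _), p.tsum_coe,
    ENNReal.toReal_one]

lemma pExp_const (c : ℝ) : pExp p (fun _ => c) = c := by
  rw [pExp, ← Finset.sum_mul, p.sum_toReal_eq_one, one_mul]

lemma pExp_mono {f g : α → ℝ} (hfg : ∀ x, f x ≤ g x) : pExp p f ≤ pExp p g :=
  Finset.sum_le_sum fun x _ => mul_le_mul_of_nonneg_left (hfg x) ENNReal.toReal_nonneg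

lemma pExp_mem_Icc {f : α → ℝ} {a b : ℝ} (hf : ∀ x, f x ∈ Icc a b) :
    pExp p f ∈ Icc a b := by
  constructor
  · simpa only [pExp_const] using pExp_mono p fun x => (hf x).1
  · simpa only [pExp_const] using pExp_mono p fun x => (hf x).2

lemma abs_pExp_sub_pExp_le {f g : α → ℝ} {c : ℝ} (hfg : ∀ x, |f x - g x| ≤ c) :
    |pExp p f - pExp p g| ≤ c :=
  calc |pExp p f - pExp p g| = |∑ x, (p x).toReal * (f x - g x)| := by
        simp only [pExp, mul_sub, Finset.sum_sub_distrib]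
    _ ≤ ∑ x, |(p x).toReal * (f x - g x)| := Finset.abs_sum_le_sum_abs _ _
    _ ≤ ∑ x, (p x).toReal * c := by
        gcongr with x
        rw [abs_mul, abs_of_nonneg ENNReal.toReal_nonneg]
        exact mul_le_mul_of_nonneg_left (hfg x) ENNReal.toReal_nonneg
    _ = c := by rw [← Finset.sum_mul, p.sum_toReal_eq_one, one_mul]

end pExp

section ciSup

variable {ι : Type*} [Finite ι] [Nonempty ι]

lemma ciSup_mem_Icc {f : ι → ℝ} {a b : ℝ} (hf : ∀ i, f i ∈ Icc a b) :
    ⨆ i, f i ∈ Icc a b :=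
  ⟨le_ciSup_of_le (Finite.bddAbove_range f) (Classical.arbitrary ι) (hf _).1,
    ciSup_le fun i => (hf i).2⟩

lemma abs_ciSup_sub_ciSup_le {f g : ι → ℝ} {c : ℝ} (hfg : ∀ i, |f i - g i| ≤ c) :
    |(⨆ i, f i) - ⨆ i, g i| ≤ c := by
  have hf := Finite.bddAbove_range f
  have hg := Finite.bddAbove_range g
  rw [abs_sub_le_iff]
  constructor
  · refine sub_le_iff_le_add.2 (ciSup_le fun i => ?_)
    linarith [le_ciSup hg i, (abs_sub_le_iff.1 (hfg i)).1]
  · refine sub_le_iff_le_add.2 (ciSup_le fun i => ?_)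
    linarith [le_ciSup hf i, (abs_sub_le_iff.1 (hfg i)).2]

end ciSup

section Qaux

variable {S A : Type*} [Fintype S] [Fintype A] [Nonempty A]
  (P : ℕ → S → A → PMF S) {H : ℕ}

lemma Qaux_mem_Icc {r : ℕ → S → A → ℝ}
    (hr : ∀ h', 1 ≤ h' → h' ≤ H → ∀ s a, 0 ≤ r h' s a ∧ r h' s a ≤ 1) :
    ∀ t ≤ H, ∀ s a, Qaux P r H t s a ∈ Icc (0 : ℝ) t := by
  intro t
  induction t with
  | zero => intro _ s a; simp [Qaux]
  | succ t ih =>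
    intro ht s a
    obtain ⟨hr0, hr1⟩ := hr (H - t) (by omega) (Nat.sub_le H t) s a
    obtain ⟨hE0, hEt⟩ := pExp_mem_Icc (P (H - t) s a) fun s' =>
      ciSup_mem_Icc fun a' => ih (by omega) s' a'
    rw [Qaux, Nat.cast_succ]
    exact ⟨by linarith, by linarith⟩

lemma abs_Qaux_sub_Qaux_le {r rhat : ℕ → S → A → ℝ} {ρ : ℝ}
    (hrclose : ∀ h', 1 ≤ h' → h' ≤ H → ∀ s a, |r h' s a - rhat h' s a| ≤ ρ) :
    ∀ t ≤ H, ∀ s a, |Qaux P r H t s a - Qaux P rhat H t s a| ≤ t * ρ := by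
  intro t
  induction t with
  | zero => intro _ s a; simp [Qaux]
  | succ t ih =>
    intro ht s a
    have hE := abs_pExp_sub_pExp_le (P (H - t) s a) fun s' =>
      abs_ciSup_sub_ciSup_le fun a' => ih (by omega) s' a'
    calc |Qaux P r H (t + 1) s a - Qaux P rhat H (t + 1) s a|
        ≤ |r (H - t) s a - rhat (H - t) s a|
          + |pExp (P (H - t) s a) (fun s' => ⨆ a', Qaux P r H t s' a')
              - pExp (P (H - t) s a) (fun s' => ⨆ a', Qaux P rhat H t s' a')| := by
          rw [Qaux, Qaux, add_sub_add_comm]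
          exact abs_add_le _ _
      _ ≤ ρ + t * ρ := add_le_add (hrclose (H - t) (by omega) (Nat.sub_le H t) s a) hE
      _ = (t + 1 : ℕ) * ρ := by push_cast; ring

end Qaux

lemma abs_sq_sub_sq_le {x y M : ℝ} (hx : |x| ≤ M) (hy : |y| ≤ M) :
    |x ^ 2 - y ^ 2| ≤ 2 * M * |x - y| :=
  calc |x ^ 2 - y ^ 2| = |x + y| * |x - y| := by rw [← abs_mul, ← sq_sub_sq]
    _ ≤ (|x| + |y|) * |x - y| := by gcongr; exact abs_add_le x y
    _ ≤ 2 * M * |x - y| := by gcongr; linarith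

lemma abs_sq_sub_sub_sub_sq_le {H G G' g g' V V' : ℝ} (hG : G ∈ Icc 0 H) (hG' : G' ∈ Icc 0 H)
    (hg : g ∈ Icc 0 1) (hg' : g' ∈ Icc 0 1) (hV : V ∈ Icc 0 H) (hV' : V' ∈ Icc 0 H) :
    |(G - g - V) ^ 2 - (G' - g' - V') ^ 2|
      ≤ 2 * (H + 1) * (|G - G'| + |g - g'| + |V - V'|) := by
  have habs : ∀ {G g V : ℝ}, G ∈ Icc 0 H → g ∈ Icc 0 1 → V ∈ Icc 0 H → |G - g - V| ≤ H + 1 :=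
    fun hG hg hV => abs_le.2 ⟨by linarith [hG.1, hg.2, hV.2], by linarith [hG.2, hg.1, hV.1]⟩
  refine (abs_sq_sub_sq_le (habs hG hg hV) (habs hG' hg' hV')).trans ?_
  gcongr
  · linarith [hG.1, hG.2]
  calc |G - g - V - (G' - g' - V')| = |(G - G') - (g - g') - (V - V')| := by ring_nf
    _ ≤ |G - G'| + |g - g'| + |V - V'| := by
        linarith [abs_sub (G - G' - (g - g')) (V - V'), abs_sub (G - G') (g - g')]

theorem covering_perturbation_bound_general {S A : Type*} [Fintype S] [Fintype A]
    [Nonempty A]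
    (H : ℕ) (P : ℕ → S → A → PMF S)
    (h : ℕ) (hh1 : 1 ≤ h) (hh2 : h ≤ H)
    (ρ : ℝ)
    (r rhat : ℕ → S → A → ℝ)
    (hr01 : ∀ h', 1 ≤ h' → h' ≤ H → ∀ s a, 0 ≤ r h' s a ∧ r h' s a ≤ 1)
    (hrhat01 : ∀ h', 1 ≤ h' → h' ≤ H → ∀ s a, 0 ≤ rhat h' s a ∧ rhat h' s a ≤ 1)
    (hrclose : ∀ h', 1 ≤ h' → h' ≤ H → ∀ s a, |r h' s a - rhat h' s a| ≤ ρ)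
    (Qh Qhath : S → A → ℝ)
    (hQh : ∀ s a, 0 ≤ Qh s a ∧ Qh s a ≤ (H : ℝ))
    (hQhath : ∀ s a, 0 ≤ Qhath s a ∧ Qhath s a ≤ (H : ℝ))
    (hQclose : ∀ s a, |Qh s a - Qhath s a| ≤ ρ)
    (Z : (S → A → ℝ) → (ℕ → S → A → ℝ) → S → A → S → ℝ)
    (hZ : ∀ (G : S → A → ℝ) (g : ℕ → S → A → ℝ) (s : S) (a : A) (s' : S),
      Z G g s a s' =
        (G s a - g h s a - ⨆ a', Qaux P g H (H - h) s' a') ^ 2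
          - (Qaux P g H (H + 1 - h) s a - g h s a
              - ⨆ a', Qaux P g H (H - h) s' a') ^ 2) :
    ∀ (s : S) (a : A) (s' : S),
      |Z Qh r s a s' - Z Qhath rhat s a s'| ≤ 30 * (H : ℝ) ^ 2 * ρ := by
  intro s a s'
  have hQsa := hQclose s a
  have hrsa := hrclose h hh1 hh2 s a
  have hρ : 0 ≤ ρ := (abs_nonneg _).trans hQsa
  have hH : (1 : ℝ) ≤ H := by exact_mod_cast hh1.trans hh2
  have hnext : H - h ≤ H := Nat.sub_le H h
  have hcur : H + 1 - h ≤ H := by omega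
  have hIcc {t : ℕ} (ht : t ≤ H) : Icc (0 : ℝ) t ⊆ Icc 0 H :=
    Icc_subset_Icc_right (by exact_mod_cast ht)
  have hscale {t : ℕ} (ht : t ≤ H) : (t : ℝ) * ρ ≤ H * ρ := by gcongr
  have hVr := ciSup_mem_Icc fun a' => hIcc hnext (Qaux_mem_Icc P hr01 _ hnext s' a')
  have hVrhat := ciSup_mem_Icc fun a' => hIcc hnext (Qaux_mem_Icc P hrhat01 _ hnext s' a')
  have hQr := hIcc hcur (Qaux_mem_Icc P hr01 _ hcur s a)
  have hQrhat := hIcc hcur (Qaux_mem_Icc P hrhat01 _ hcur s a)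
  have hVclose := (abs_ciSup_sub_ciSup_le fun a' =>
    abs_Qaux_sub_Qaux_le P hrclose _ hnext s' a').trans (hscale hnext)
  have hQaux_close := (abs_Qaux_sub_Qaux_le P hrclose _ hcur s a).trans (hscale hcur)
  rw [hZ, hZ, sub_sub_sub_comm]
  refine (abs_sub _ _).trans ?_
  calc _ ≤ 2 * (H + 1) * (ρ + ρ + H * ρ) + 2 * (H + 1) * (H * ρ + ρ + H * ρ) := by
        gcongr
        · exact (abs_sq_sub_sub_sub_sq_le (hQh s a) (hQhath s a) (hr01 h hh1 hh2 s a)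
            (hrhat01 h hh1 hh2 s a) hVr hVrhat).trans (by gcongr)
        · exact (abs_sq_sub_sub_sub_sq_le hQr hQrhat (hr01 h hh1 hh2 s a)
            (hrhat01 h hh1 hh2 s a) hVr hVrhat).trans (by gcongr)
    _ ≤ 30 * H ^ 2 * ρ := by
        nlinarith [mul_nonneg (mul_nonneg hρ (sub_nonneg.2 hH)) (by linarith : (0 : ℝ) ≤ 4 * H + 2)]

/-- Covering perturbation bound for squared TD errors with optimal-Q targets.
Here `Z G g s a s'` is
`(G(s,a) − g_h(s,a) − max_{a'} Q^{*,g}_{h+1}(s',a'))²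
 − (Q^{*,g}_h(s,a) − g_h(s,a) − max_{a'} Q^{*,g}_{h+1}(s',a'))²`,
with `Q^{*,g}_{h'} = Qaux P g H (H + 1 − h')`. -/
theorem covering_perturbation_bound {S A : Type*} [Fintype S] [Fintype A]
    [Nonempty S] [Nonempty A]
    (H : ℕ) (hH : 1 ≤ H) (P : ℕ → S → A → PMF S)
    (h : ℕ) (hh1 : 1 ≤ h) (hh2 : h ≤ H)
    (ρ : ℝ) (hρ : 0 ≤ ρ)
    (r rhat : ℕ → S → A → ℝ)
    (hr01 : ∀ h', 1 ≤ h' → h' ≤ H → ∀ s a, 0 ≤ r h' s a ∧ r h' s a ≤ 1)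
    (hrhat01 : ∀ h', 1 ≤ h' → h' ≤ H → ∀ s a, 0 ≤ rhat h' s a ∧ rhat h' s a ≤ 1)
    (hrclose : ∀ h', 1 ≤ h' → h' ≤ H → ∀ s a, |r h' s a - rhat h' s a| ≤ ρ)
    (Qh Qhath : S → A → ℝ)
    (hQh : ∀ s a, 0 ≤ Qh s a ∧ Qh s a ≤ (H : ℝ))
    (hQhath : ∀ s a, 0 ≤ Qhath s a ∧ Qhath s a ≤ (H : ℝ))
    (hQclose : ∀ s a, |Qh s a - Qhath s a| ≤ ρ)
    (Z : (S → A → ℝ) → (ℕ → S → A → ℝ) → S → A → S → ℝ)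
    (hZ : ∀ (G : S → A → ℝ) (g : ℕ → S → A → ℝ) (s : S) (a : A) (s' : S),
      Z G g s a s' =
        (G s a - g h s a - ⨆ a', Qaux P g H (H - h) s' a') ^ 2
          - (Qaux P g H (H + 1 - h) s a - g h s a
              - ⨆ a', Qaux P g H (H - h) s' a') ^ 2) :
    ∀ (s : S) (a : A) (s' : S),
      |Z Qh r s a s' - Z Qhath rhat s a s'| ≤ 30 * (H : ℝ) ^ 2 * ρ :=
  covering_perturbation_bound_general H P h hh1 hh2 ρ r rhat hr01 hrhat01 hrclose Qh Qhath hQh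
    hQhath hQclose Z hZ
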